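/- arXiv:2401.04318 — 3 statements merged into one kernel-verified Lean document; each statement's English description precedes it below -/
import Mathlib

section
/- Fix a nonnegative integer α. Define Boolean values P(i,j) for i ∈ {0,…,n} and j ∈ {0,…,m} by: P(0,0) = true; P(i,0) = (α = 0) for i ≥ 1; P(0,j) = false for j ≥ 1; and, for i,j ≥ 1, P(i,j) = true if and only if there exists ℓ ∈ {1,…,j+1} with P(i−1, ℓ−1) = true and v_i({g_ℓ,…,g_j}) = α (where {g_ℓ,…,g_j} = ∅ when ℓ = j+1). Then P(i,j) holds if and only if there exists an order-consistent contiguous allocation (A₁,…,A_i) of the items {g₁,…,g_j} among agents 1,…,i with v_t(A_t) = α for every t ≤ i. Consequently, an order-consistent equitable allocation of all of M exists if and only if P(n,m) holds for some α ∈ { v₁({g₁,…,g_p}) : 0 ≤ p ≤ m }. -/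
/-!
Agents are 0-indexed `0, …, n-1`, items are 0-indexed `0, …, m-1` arranged on a
path in index order, and `v i g` is the value of item `g` for agent `i`
(valuations are additive).

`dpP v α i j` is the table entry `P(i, j)` of the paper: it is defined by
`P(0,0) = true`, `P(i,0) = (α = 0)` for `i ≥ 1`, `P(0,j) = false` for `j ≥ 1`,
and for `i, j ≥ 1`, `P(i,j)` holds iff there is `ℓ ∈ {1, …, j+1}` with
`P(i-1, ℓ-1)` and `v_i({g_ℓ, …, g_j}) = α` (in the 0-indexed encoding below, the
existential variable `ℓ` stands for `ℓ - 1` and the block `{g_ℓ, …, g_j}` is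
`Finset.Ico ℓ j`).

An order-consistent contiguous allocation of the first `j` items among the
first `i` agents is encoded by cut points `k 0 = 0 ≤ k 1 ≤ ⋯ ≤ k i = j`, agent
`t` receiving `Finset.Ico (k t) (k (t+1))`.  An allocation is equitable when
all agents assign the same value to their own bundles.
-/

def dpP (v : ℕ → ℕ → ℕ) (α : ℕ) : ℕ → ℕ → Prop
  | 0, 0 => True
  | _ + 1, 0 => α = 0
  | 0, _ + 1 => False
  | i + 1, j + 1 => ∃ ℓ ≤ j + 1, dpP v α i ℓ ∧ ∑ g ∈ Finset.Ico ℓ (j + 1), v i g = α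
  termination_by i j => (i, j)

lemma dpP_chain (k : ℕ → ℕ) (n : ℕ) (h : ∀ t < n, k t ≤ k (t + 1)) :
    ∀ s t, s ≤ t → t ≤ n → k s ≤ k t := by
  intro s t hst htn
  induction t with
  | zero =>
    have : s = 0 := Nat.le_zero.mp hst
    simp [this]
  | succ t ih =>
    rcases Nat.lt_or_ge s (t + 1) with h1 | h1
    · exact le_trans (ih (Nat.lt_succ_iff.mp h1) (le_trans (Nat.le_succ t) htn))
        (h t htn)
    · have : s = t + 1 := le_antisymm hst h1
      simp [this]

lemma dpP_iff (v : ℕ → ℕ → ℕ) (α : ℕ) : ∀ i j, dpP v α i j ↔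
    ∃ k : ℕ → ℕ, k 0 = 0 ∧ k i = j ∧ (∀ t < i, k t ≤ k (t + 1)) ∧
      ∀ t < i, ∑ g ∈ Finset.Ico (k t) (k (t + 1)), v t g = α := by
  intro i
  induction i with
  | zero =>
    intro j
    cases j with
    | zero =>
      simp only [dpP]
      constructor
      · intro _
        exact ⟨fun _ => 0, rfl, rfl, by simp, by simp⟩
      · intro _; trivial
    | succ j =>
      simp only [dpP]
      constructor
      · intro h; exact h.elim
      · rintro ⟨k, h0, h1, -, -⟩
        simp [h0] at h1
  | succ i ih =>
    intro j
    cases j with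
    | zero =>
      simp only [dpP]
      constructor
      · intro hα
        exact ⟨fun _ => 0, rfl, rfl, fun t _ => le_rfl, fun t _ => by simp [hα]⟩
      · rintro ⟨k, h0, h1, hmono, hsum⟩
        have hki : k i = 0 := Nat.le_zero.mp (h1 ▸ hmono i (Nat.lt_succ_self i))
        have hs := hsum i (Nat.lt_succ_self i)
        rw [hki, h1] at hs
        simpa using hs.symm
    | succ j =>
      simp only [dpP]
      constructor
      · rintro ⟨ℓ, hℓ, hd, hsum⟩
        obtain ⟨k, h0, h1, hmono, hs⟩ := (ih ℓ).mp hd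
        refine ⟨fun t => if t ≤ i then k t else j + 1, ?_, ?_, ?_, ?_⟩
        · simp [h0]
        · simp
        · intro t ht
          rcases Nat.lt_or_ge t i with h2 | h2
          · simp only [Nat.le_of_lt h2, Nat.succ_le_of_lt h2, if_pos]
            exact hmono t h2
          · have : t = i := le_antisymm (Nat.lt_succ_iff.mp ht) h2
            subst this
            simp [h1, hℓ]
        · intro t ht
          rcases Nat.lt_or_ge t i with h2 | h2
          · simp only [Nat.le_of_lt h2, Nat.succ_le_of_lt h2, if_pos]
            exact hs t h2
          · have : t = i := le_antisymm (Nat.lt_succ_iff.mp ht) h2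
            subst this
            simpa [h1] using hsum
      · rintro ⟨k, h0, h1, hmono, hsum⟩
        refine ⟨k i, h1 ▸ hmono i (Nat.lt_succ_self i),
          (ih (k i)).mpr ⟨k, h0, rfl,
            fun t ht => hmono t (ht.trans (Nat.lt_succ_self i)),
            fun t ht => hsum t (ht.trans (Nat.lt_succ_self i))⟩, ?_⟩
        have hs := hsum i (Nat.lt_succ_self i)
        rw [h1] at hs
        exact hs

theorem dpP_iff_equal_value_allocation (n m : ℕ) (v : ℕ → ℕ → ℕ) (α : ℕ) :
    (∀ i ≤ n, ∀ j ≤ m,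
      (dpP v α i j ↔ ∃ k : ℕ → ℕ, k 0 = 0 ∧ k i = j ∧ (∀ t < i, k t ≤ k (t + 1)) ∧
        ∀ t < i, ∑ g ∈ Finset.Ico (k t) (k (t + 1)), v t g = α)) ∧
    ((∃ k : ℕ → ℕ, k 0 = 0 ∧ k n = m ∧ (∀ t < n, k t ≤ k (t + 1)) ∧
        ∀ s < n, ∀ t < n, ∑ g ∈ Finset.Ico (k s) (k (s + 1)), v s g
          = ∑ g ∈ Finset.Ico (k t) (k (t + 1)), v t g) ↔
      ∃ p ≤ m, dpP v (∑ g ∈ Finset.range p, v 0 g) n m) := by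
  constructor
  · intro i _ j _
    exact dpP_iff v α i j
  · constructor
    · rintro ⟨k, h0, h1, hmono, heq⟩
      cases n with
      | zero =>
        have hm : m = 0 := by rw [← h1, h0]
        subst hm
        exact ⟨0, le_rfl, by simp [dpP]⟩
      | succ n' =>
        refine ⟨k 1, ?_, ?_⟩
        · rw [← h1]
          exact dpP_chain k (n' + 1) hmono 1 (n' + 1) (Nat.succ_le_succ (Nat.zero_le _)) le_rfl
        · apply (dpP_iff v _ (n' + 1) m).mpr
          refine ⟨k, h0, h1, hmono, fun t ht => ?_⟩
          rw [heq t ht 0 (Nat.succ_pos n'), h0, Finset.range_eq_Ico]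
    · rintro ⟨p, hp, hd⟩
      obtain ⟨k, h0, h1, hmono, hs⟩ := (dpP_iff v _ n m).mp hd
      exact ⟨k, h0, h1, hmono, fun s hsn t htn => by rw [hs s hsn, hs t htn]⟩
end

section
/- Let a ≥ 1 and assume each agent values at most a items positively, i.e., |{ g ∈ M : v_i(g) ≥ 1 }| ≤ a for every i ∈ N. Then for every contiguous allocation A* there exists a contiguous allocation A such that a · min_{i∈N} v_i(A_i) ≥ min_{i∈N} v_i(A*_i). In particular, the maximum egalitarian social welfare achievable by an agent-side injective assignment of single items (each agent i receives one item μ(i), with μ injective) is at least 1/a times the maximum egalitarian social welfare over contiguous allocations. -/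
/-!
Given a partition of the items into nonempty bundles, let every agent keep only its most valuable
item of its own bundle. Disjointness of the bundles makes this assignment injective, and since an
agent values at most `a` items positively, its bundle is worth at most `a` times that item. A
partition with an empty bundle has welfare `0` and needs no comparison.
-/

open Finset

noncomputable def egalitarianWelfare (n : ℕ) (f : ℕ → ℕ) : ℕ := sInf {x | ∃ i < n, x = f i}

section egalitarianWelfare

variable {n : ℕ} {f g : ℕ → ℕ}

lemma egalitarianWelfare_le {i : ℕ} (hi : i < n) : egalitarianWelfare n f ≤ f i :=
  Nat.sInf_le ⟨i, hi, rfl⟩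

lemma exists_egalitarianWelfare_eq (hn : 0 < n) : ∃ i < n, egalitarianWelfare n f = f i :=
  Nat.sInf_mem (s := {x | ∃ i < n, x = f i}) ⟨f 0, 0, hn, rfl⟩

lemma egalitarianWelfare_le_mul (hn : 0 < n) {a : ℕ} (h : ∀ i < n, f i ≤ a * g i) :
    egalitarianWelfare n f ≤ a * egalitarianWelfare n g := by
  obtain ⟨j, hj, hgj⟩ := exists_egalitarianWelfare_eq (f := g) hn
  calc egalitarianWelfare n f ≤ f j := egalitarianWelfare_le hj
    _ ≤ a * g j := h j hj
    _ = a * egalitarianWelfare n g := by rw [hgj]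

end egalitarianWelfare

lemma Finset.sum_le_card_filter_pos_mul {α : Type*} {s t : Finset α} (hst : s ⊆ t)
    {f : α → ℕ} {b : ℕ} (hb : ∀ x ∈ s, f x ≤ b) :
    ∑ x ∈ s, f x ≤ #{x ∈ t | 1 ≤ f x} * b := by
  calc ∑ x ∈ s, f x = ∑ x ∈ s with 1 ≤ f x, f x :=
        (sum_filter_of_ne fun x _ hx => Nat.one_le_iff_ne_zero.mpr hx).symm
    _ ≤ #{x ∈ s | 1 ≤ f x} * b := by
      simpa using sum_le_card_nsmul _ f b fun x hx => hb x (mem_filter.mp hx).1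
    _ ≤ #{x ∈ t | 1 ≤ f x} * b := by gcongr

lemma Set.PairwiseDisjoint.exists_injOn_max_mem {ι α β : Type*} [Nonempty α] [LinearOrder β]
    {s : Set ι} {A : ι → Finset α} (hdisj : s.PairwiseDisjoint A)
    (hne : ∀ i ∈ s, (A i).Nonempty) (w : ι → α → β) :
    ∃ μ : ι → α, Set.InjOn μ s ∧ ∀ i ∈ s, μ i ∈ A i ∧ ∀ x ∈ A i, w i x ≤ w i (μ i) := by
  have hmax : ∀ i, ∃ g, i ∈ s → g ∈ A i ∧ ∀ x ∈ A i, w i x ≤ w i g := by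
    intro i
    by_cases hi : i ∈ s
    · obtain ⟨g, hg, hgmax⟩ := Finset.exists_max_image (A i) (w i) (hne i hi)
      exact ⟨g, fun _ => ⟨hg, hgmax⟩⟩
    · exact ⟨Classical.arbitrary α, fun h => absurd h hi⟩
  choose μ hμ using hmax
  refine ⟨μ, fun i hi j hj hij => ?_, hμ⟩
  by_contra hij_ne
  exact Finset.disjoint_left.mp (hdisj hi hj hij_ne) (hμ i hi).1 (hij ▸ (hμ j hj).1)

lemma exists_singleItem_egalitarianWelfare_ge {n m a : ℕ} (hn : 0 < n) {v : ℕ → ℕ → ℕ}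
    (hsparse : ∀ i < n, #{g ∈ range m | 1 ≤ v i g} ≤ a) {A : ℕ → Finset ℕ}
    (hne : ∀ i < n, (A i).Nonempty)
    (hdisj : ∀ i < n, ∀ j < n, i ≠ j → Disjoint (A i) (A j))
    (hcov : (range n).biUnion A = range m) :
    ∃ μ : ℕ → ℕ, Set.InjOn μ (Set.Iio n) ∧ (∀ i < n, μ i < m) ∧
      egalitarianWelfare n (fun i => ∑ g ∈ A i, v i g)
        ≤ a * egalitarianWelfare n (fun i => v i (μ i)) := by
  obtain ⟨μ, hinj, hμ⟩ :=
    Set.PairwiseDisjoint.exists_injOn_max_mem (s := Set.Iio n) hdisj hne v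
  have hsub : ∀ i < n, A i ⊆ range m := fun i hi =>
    hcov ▸ subset_biUnion_of_mem A (mem_range.mpr hi)
  refine ⟨μ, hinj, fun i hi => mem_range.mp (hsub i hi (hμ i hi).1), ?_⟩
  refine egalitarianWelfare_le_mul hn fun i hi => ?_
  calc ∑ g ∈ A i, v i g ≤ #{g ∈ range m | 1 ≤ v i g} * v i (μ i) :=
        sum_le_card_filter_pos_mul (hsub i hi) (hμ i hi).2
    _ ≤ a * v i (μ i) := Nat.mul_le_mul_right _ (hsparse i hi)

lemma bddAbove_singleItem_egalitarianWelfare {n m : ℕ} (hn : 0 < n) (v : ℕ → ℕ → ℕ) :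
    BddAbove {w : ℕ | ∃ μ : ℕ → ℕ, Set.InjOn μ (Set.Iio n) ∧ (∀ i < n, μ i < m) ∧
      w = egalitarianWelfare n (fun i => v i (μ i))} := by
  refine ⟨∑ g ∈ range m, v 0 g, ?_⟩
  rintro w ⟨μ, -, hlt, rfl⟩
  calc egalitarianWelfare n (fun i => v i (μ i)) ≤ v 0 (μ 0) := egalitarianWelfare_le hn
    _ ≤ ∑ g ∈ range m, v 0 g :=
      single_le_sum (fun _ _ => Nat.zero_le _) (mem_range.mpr (hlt 0 hn))

theorem sparse_emax_single_item_approx (n m a : ℕ) (hn : 0 < n) (ha : 1 ≤ a)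
    (v : ℕ → ℕ → ℕ)
    (hsparse : ∀ i < n, ((Finset.range m).filter fun g => 1 ≤ v i g).card ≤ a) :
    (∀ Astar : ℕ → Finset ℕ,
      (∀ i < n, ∃ c d, Astar i = Finset.Ico c d) →
      (∀ i < n, ∀ j < n, i ≠ j → Disjoint (Astar i) (Astar j)) →
      (Finset.range n).biUnion Astar = Finset.range m →
      ∃ A : ℕ → Finset ℕ,
        (∀ i < n, ∃ c d, A i = Finset.Ico c d) ∧
        (∀ i < n, ∀ j < n, i ≠ j → Disjoint (A i) (A j)) ∧
        (Finset.range n).biUnion A = Finset.range m ∧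
        sInf {x : ℕ | ∃ i < n, x = ∑ g ∈ Astar i, v i g}
          ≤ a * sInf {x : ℕ | ∃ i < n, x = ∑ g ∈ A i, v i g}) ∧
    sSup {w : ℕ | ∃ A : ℕ → Finset ℕ,
        (∀ i < n, ∃ c d, A i = Finset.Ico c d) ∧
        (∀ i < n, ∀ j < n, i ≠ j → Disjoint (A i) (A j)) ∧
        (Finset.range n).biUnion A = Finset.range m ∧
        w = sInf {x : ℕ | ∃ i < n, x = ∑ g ∈ A i, v i g}}
      ≤ a * sSup {w : ℕ | ∃ μ : ℕ → ℕ,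
        Set.InjOn μ (Set.Iio n) ∧ (∀ i < n, μ i < m) ∧
        w = sInf {x : ℕ | ∃ i < n, x = v i (μ i)}} := by
  refine ⟨fun Astar hIco hdisj hcov =>
    ⟨Astar, hIco, hdisj, hcov, Nat.le_mul_of_pos_left _ ha⟩, csSup_le' ?_⟩
  rintro _ ⟨A, -, hdisj, hcov, rfl⟩
  by_cases hne : ∀ i < n, (A i).Nonempty
  · obtain ⟨μ, hinj, hlt, hle⟩ := exists_singleItem_egalitarianWelfare_ge hn hsparse hne hdisj hcov
    exact hle.trans (Nat.mul_le_mul_left a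
      (le_csSup (bddAbove_singleItem_egalitarianWelfare hn v) ⟨μ, hinj, hlt, rfl⟩))
  · push Not at hne
    obtain ⟨i, hi, hAi⟩ := hne
    have hzero : egalitarianWelfare n (fun i => ∑ g ∈ A i, v i g) ≤ 0 := by
      simpa only [hAi, sum_empty] using
        egalitarianWelfare_le (f := fun i => ∑ g ∈ A i, v i g) hi
    exact hzero.trans (Nat.zero_le _)
end

section
/- The CAP instance constructed from the 2L-OCC-3SAT formula φ (as in the context) admits a contiguous allocation whose utilitarian social welfare equals the number of items, 5n + m + 1 (i.e., every item is allocated to an agent who values it), if and only if φ is satisfiable. Moreover, when φ is satisfiable, such a contiguous allocation can be chosen so that every agent receives at most two items. -/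
/-!
A 2L-OCC-3SAT formula over variables `Fin n` with clauses `C j = ℓ_{j,0} ∨ ℓ_{j,1} ∨ ℓ_{j,2}`,
where the literal `C j t : Fin n × Bool` is a variable together with its sign
(`true` = positive), and every literal occurs exactly twice among the clauses.

The reduced CAP instance (0-indexed):
* Agents: variable agents `Sum.inl i` (`i : Fin n`), divider agents
  `Sum.inr (Sum.inl d)` (`d : Fin (n+1)`), occurrence agents
  `Sum.inr (Sum.inr (j, t))` (`j : Fin m`, `t : Fin 3`).
* Items `0, …, 5n + m` on a path: for `i < n`, block `V_i` is
  `{5i, 5i+1}` (positive occurrence items), `5i+2` (divider item),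
  `{5i+3, 5i+4}` (negative occurrence items); `5n` is the last divider item;
  `5n+1+j` is the clause item of `C j`.
* `occRank C j t` is the number of occurrences of the literal `C j t` strictly
  before position `(j, t)`, so that `(j, t)` is its `occRank`-th occurrence
  (0-indexed, `occRank ∈ {0, 1}`).
* Binary valuations `umaxVal`: variable agent `i` values exactly the four
  occurrence items of `V_i`; divider agent `d` values exactly its divider
  item; occurrence agent `(j, t)` with literal `(x, b)` values exactly the
  clause item of `C j` and the `occRank`-th positive (if `b`) or negative
  (if `¬b`) occurrence item of `V_x`.

A contiguous allocation is `A : Agent → Finset ℕ` with interval bundles,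
pairwise disjoint, covering `Finset.range (5n + m + 1)`; its utilitarian
social welfare is `∑ i, ∑ g ∈ A i, umaxVal n m C i g`.  It has welfare equal
to the number of items `5n + m + 1` iff the formula is satisfiable; moreover,
when the formula is satisfiable such an allocation exists in which every agent
receives at most two items.
-/

def occRank {n m : ℕ} (C : Fin m → Fin 3 → Fin n × Bool) (j : Fin m) (t : Fin 3) : ℕ :=
  (Finset.univ.filter fun p : Fin m × Fin 3 =>
    C p.1 p.2 = C j t ∧ (p.1 < j ∨ (p.1 = j ∧ p.2 < t))).card

def umaxVal (n m : ℕ) (C : Fin m → Fin 3 → Fin n × Bool) :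
    (Fin n ⊕ Fin (n + 1) ⊕ Fin m × Fin 3) → ℕ → ℕ
  | Sum.inl i, g =>
      if g = 5 * (i : ℕ) ∨ g = 5 * (i : ℕ) + 1 ∨ g = 5 * (i : ℕ) + 3 ∨ g = 5 * (i : ℕ) + 4
      then 1 else 0
  | Sum.inr (Sum.inl d), g =>
      if ((d : ℕ) < n ∧ g = 5 * (d : ℕ) + 2) ∨ ((d : ℕ) = n ∧ g = 5 * n) then 1 else 0
  | Sum.inr (Sum.inr (j, t)), g =>
      if g = 5 * n + 1 + (j : ℕ) ∨
         g = 5 * ((C j t).1 : ℕ) + (if (C j t).2 then 0 else 3) + occRank C j t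
      then 1 else 0

namespace UmaxAux


def ltp {m : ℕ} (p q : Fin m × Fin 3) : Prop :=
  p.1 < q.1 ∨ (p.1 = q.1 ∧ p.2 < q.2)

instance {m : ℕ} (p q : Fin m × Fin 3) : Decidable (ltp p q) :=
  inferInstanceAs (Decidable (_ ∨ _))

lemma ltp_irrefl {m : ℕ} (p : Fin m × Fin 3) : ¬ ltp p p := by
  rintro (h | ⟨_, h⟩) <;> exact absurd h (lt_irrefl _)

lemma ltp_trans {m : ℕ} {p q r : Fin m × Fin 3} (h1 : ltp p q) (h2 : ltp q r) : ltp p r := by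
  rcases h1 with h1 | ⟨e1, h1⟩ <;> rcases h2 with h2 | ⟨e2, h2⟩
  · exact Or.inl (lt_trans h1 h2)
  · exact Or.inl (e2 ▸ h1)
  · exact Or.inl (e1 ▸ h2)
  · exact Or.inr ⟨e1.trans e2, lt_trans h1 h2⟩

lemma ltp_trich {m : ℕ} (p q : Fin m × Fin 3) : p = q ∨ ltp p q ∨ ltp q p := by
  obtain ⟨p1, p2⟩ := p; obtain ⟨q1, q2⟩ := q
  rcases lt_trichotomy p1 q1 with h | h | h
  · exact Or.inr (Or.inl (Or.inl h))
  · rcases lt_trichotomy p2 q2 with h2 | h2 | h2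
    · exact Or.inr (Or.inl (Or.inr ⟨h, h2⟩))
    · exact Or.inl (by simp [h, h2])
    · exact Or.inr (Or.inr (Or.inr ⟨h.symm, h2⟩))
  · exact Or.inr (Or.inr (Or.inl h))

lemma occRank_eq {n m : ℕ} (C : Fin m → Fin 3 → Fin n × Bool) (j : Fin m) (t : Fin 3) :
    occRank C j t = (Finset.univ.filter fun p : Fin m × Fin 3 =>
      C p.1 p.2 = C j t ∧ ltp p (j, t)).card := rfl

lemma occRank_le_one {n m : ℕ} {C : Fin m → Fin 3 → Fin n × Bool}
    (hocc : ∀ (x : Fin n) (b : Bool),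
      (Finset.univ.filter fun p : Fin m × Fin 3 => C p.1 p.2 = (x, b)).card = 2)
    (j : Fin m) (t : Fin 3) : occRank C j t ≤ 1 := by
  have hsub : (Finset.univ.filter fun p : Fin m × Fin 3 =>
      C p.1 p.2 = C j t ∧ ltp p (j, t)) ⊂
      (Finset.univ.filter fun p : Fin m × Fin 3 => C p.1 p.2 = C j t) := by
    constructor
    · intro p hp
      simp only [Finset.mem_filter, Finset.mem_univ, true_and] at hp ⊢
      exact hp.1
    · intro hs
      have := hs (by simp : (j, t) ∈ Finset.univ.filter
        fun p : Fin m × Fin 3 => C p.1 p.2 = C j t)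
      simp only [Finset.mem_filter, Finset.mem_univ, true_and] at this
      exact ltp_irrefl (j, t) this
  have h1 := Finset.card_lt_card hsub
  rw [← occRank_eq] at h1
  have h2 : (Finset.univ.filter fun p : Fin m × Fin 3 => C p.1 p.2 = C j t).card = 2 := by
    have := hocc (C j t).1 (C j t).2
    simpa using this
  omega

lemma occRank_strict {n m : ℕ} {C : Fin m → Fin 3 → Fin n × Bool}
    {j j' : Fin m} {t t' : Fin 3} (hC : C j t = C j' t') (h : ltp (j, t) (j', t')) :
    occRank C j t < occRank C j' t' := by
  rw [occRank_eq, occRank_eq]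
  apply Finset.card_lt_card
  constructor
  · intro p hp
    simp only [Finset.mem_filter, Finset.mem_univ, true_and] at hp ⊢
    exact ⟨hp.1.trans hC, ltp_trans hp.2 h⟩
  · intro hs
    have := hs (by simp [hC, h] : (j, t) ∈ Finset.univ.filter
      fun p : Fin m × Fin 3 => C p.1 p.2 = C j' t' ∧ ltp p (j', t'))
    simp only [Finset.mem_filter, Finset.mem_univ, true_and] at this
    exact ltp_irrefl (j, t) (by tauto)

lemma occ_eq {n m : ℕ} {C : Fin m → Fin 3 → Fin n × Bool}
    {j j' : Fin m} {t t' : Fin 3} (hC : C j t = C j' t')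
    (hr : occRank C j t = occRank C j' t') : j = j' ∧ t = t' := by
  rcases ltp_trich (j, t) (j', t') with h | h | h
  · exact ⟨congrArg Prod.fst h, congrArg Prod.snd h⟩
  · exact absurd hr (Nat.ne_of_lt (occRank_strict hC h))
  · exact absurd hr.symm (Nat.ne_of_lt (occRank_strict hC.symm h))

lemma rank_surj {n m : ℕ} {C : Fin m → Fin 3 → Fin n × Bool}
    (hocc : ∀ (x : Fin n) (b : Bool),
      (Finset.univ.filter fun p : Fin m × Fin 3 => C p.1 p.2 = (x, b)).card = 2)
    (x : Fin n) (b : Bool) (r : ℕ) (hr : r < 2) :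
    ∃ p : Fin m × Fin 3, C p.1 p.2 = (x, b) ∧ occRank C p.1 p.2 = r := by
  set T := Finset.univ.filter fun p : Fin m × Fin 3 => C p.1 p.2 = (x, b) with hT
  have hcard : T.card = 2 := hocc x b
  have himg : T.image (fun p => occRank C p.1 p.2) = Finset.range 2 := by
    apply Finset.eq_of_subset_of_card_le
    · intro r hrm
      simp only [Finset.mem_image] at hrm
      obtain ⟨p, hp, hpr⟩ := hrm
      simp only [hT, Finset.mem_filter] at hp
      have := occRank_le_one hocc p.1 p.2
      simp only [Finset.mem_range]
      omega
    · rw [Finset.card_range, Finset.card_image_of_injOn, hcard]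
      intro p hp q hq hpq
      simp only [hT, Finset.coe_filter, Finset.mem_univ, true_and, Set.mem_setOf_eq] at hp hq
      obtain ⟨h1, h2⟩ := occ_eq (hp.trans hq.symm) hpq
      exact Prod.ext h1 h2
  have : r ∈ T.image (fun p => occRank C p.1 p.2) := by
    rw [himg]; simpa using hr
  simp only [Finset.mem_image, hT, Finset.mem_filter, Finset.mem_univ, true_and] at this
  obtain ⟨p, hp1, hp2⟩ := this
  exact ⟨p, hp1, hp2⟩

lemma subset_pair {S : Finset ℕ} {a : ℕ} (h : S ⊆ {a, a + 1}) :
    ∃ u v, S = Finset.Ico u v := by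
  by_cases ha : a ∈ S <;> by_cases hb : a + 1 ∈ S
  · exact ⟨a, a + 2, by
      ext g; simp only [Finset.mem_Ico]
      constructor
      · intro hg; have := h hg; simp at this; omega
      · intro hg
        have : g = a ∨ g = a + 1 := by omega
        rcases this with rfl | rfl <;> assumption⟩
  · exact ⟨a, a + 1, by
      ext g; simp only [Finset.mem_Ico]
      constructor
      · intro hg; have := h hg; simp at this
        rcases this with rfl | rfl
        · omega
        · exact absurd hg hb
      · intro hg; have : g = a := by omega
        rw [this]; exact ha⟩
  · exact ⟨a + 1, a + 2, by
      ext g; simp only [Finset.mem_Ico]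
      constructor
      · intro hg; have := h hg; simp at this
        rcases this with rfl | rfl
        · exact absurd hg ha
        · omega
      · intro hg; have : g = a + 1 := by omega
        rw [this]; exact hb⟩
  · exact ⟨0, 0, by
      ext g; simp only [Finset.mem_Ico]
      constructor
      · intro hg; have := h hg; simp at this
        rcases this with rfl | rfl
        · exact absurd hg ha
        · exact absurd hg hb
      · omega⟩



def itm {n m : ℕ} (C : Fin m → Fin 3 → Fin n × Bool) (j : Fin m) (t : Fin 3) : ℕ :=
  5 * ((C j t).1 : ℕ) + (if (C j t).2 then 0 else 3) + occRank C j t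

lemma val_inl {n m : ℕ} (C : Fin m → Fin 3 → Fin n × Bool) (x : Fin n) (g : ℕ) :
    umaxVal n m C (Sum.inl x) g = 1 ↔
      (g = 5 * (x : ℕ) ∨ g = 5 * (x : ℕ) + 1 ∨ g = 5 * (x : ℕ) + 3 ∨ g = 5 * (x : ℕ) + 4) := by
  simp [umaxVal]; tauto

lemma val_div {n m : ℕ} (C : Fin m → Fin 3 → Fin n × Bool) (d : Fin (n + 1)) (g : ℕ) :
    umaxVal n m C (Sum.inr (Sum.inl d)) g = 1 ↔
      (((d : ℕ) < n ∧ g = 5 * (d : ℕ) + 2) ∨ ((d : ℕ) = n ∧ g = 5 * n)) := by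
  simp [umaxVal]; tauto

lemma val_occ {n m : ℕ} (C : Fin m → Fin 3 → Fin n × Bool) (j : Fin m) (t : Fin 3) (g : ℕ) :
    umaxVal n m C (Sum.inr (Sum.inr (j, t))) g = 1 ↔
      (g = 5 * n + 1 + (j : ℕ) ∨ g = itm C j t) := by
  simp [umaxVal, itm]; tauto

lemma val_le_one {n m : ℕ} (C : Fin m → Fin 3 → Fin n × Bool)
    (i : Fin n ⊕ Fin (n + 1) ⊕ Fin m × Fin 3) (g : ℕ) : umaxVal n m C i g ≤ 1 := by
  rcases i with x | d | ⟨j, t⟩ <;> simp only [umaxVal] <;> split_ifs <;> omega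





variable {n m : ℕ} {C : Fin m → Fin 3 → Fin n × Bool}



lemma itm_decomp (hocc : ∀ (x : Fin n) (b : Bool),
      (Finset.univ.filter fun p : Fin m × Fin 3 => C p.1 p.2 = (x, b)).card = 2)
    (j : Fin m) (t : Fin 3) :
    ∃ c, itm C j t = 5 * ((C j t).1 : ℕ) + c ∧ c < 5 ∧ c ≠ 2 ∧
      ((C j t).2 = true → c = occRank C j t) ∧
      ((C j t).2 = false → c = 3 + occRank C j t) := by
  have hr := occRank_le_one hocc j t
  refine ⟨(if (C j t).2 then 0 else 3) + occRank C j t, by rw [itm]; ring, ?_, ?_, ?_, ?_⟩ <;>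
    cases h : (C j t).2 <;> simp [h] <;> omega

lemma itm_lt (hocc : ∀ (x : Fin n) (b : Bool),
      (Finset.univ.filter fun p : Fin m × Fin 3 => C p.1 p.2 = (x, b)).card = 2)
    (j : Fin m) (t : Fin 3) : itm C j t < 5 * n := by
  obtain ⟨c, hc, h5, _⟩ := itm_decomp hocc j t
  have hx : ((C j t).1 : ℕ) < n := (C j t).1.isLt
  omega

lemma itm_inj (hocc : ∀ (x : Fin n) (b : Bool),
      (Finset.univ.filter fun p : Fin m × Fin 3 => C p.1 p.2 = (x, b)).card = 2)
    {j j' : Fin m} {t t' : Fin 3} (h : itm C j t = itm C j' t') :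
    j = j' ∧ t = t' := by
  have hr := occRank_le_one hocc j t
  have hr' := occRank_le_one hocc j' t'
  have hx : ((C j t).1 : ℕ) < n := (C j t).1.isLt
  have hx' : ((C j' t').1 : ℕ) < n := (C j' t').1.isLt
  rw [itm, itm] at h
  cases hb : (C j t).2 <;> cases hb' : (C j' t').2 <;> rw [hb, hb'] at h <;> simp only [ite_true, ite_false,
      Bool.false_eq_true, Bool.true_eq_false] at h
  · have hxx : ((C j t).1 : ℕ) = ((C j' t').1 : ℕ) := by omega
    have hrr : occRank C j t = occRank C j' t' := by omega
    exact occ_eq (by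
      have : (C j t).1 = (C j' t').1 := Fin.ext hxx
      exact Prod.ext this (hb.trans hb'.symm)) hrr
  · exfalso; omega
  · exfalso; omega
  · have hxx : ((C j t).1 : ℕ) = ((C j' t').1 : ℕ) := by omega
    have hrr : occRank C j t = occRank C j' t' := by omega
    exact occ_eq (by
      have : (C j t).1 = (C j' t').1 := Fin.ext hxx
      exact Prod.ext this (hb.trans hb'.symm)) hrr


lemma construct (hocc : ∀ (x : Fin n) (b : Bool),
      (Finset.univ.filter fun p : Fin m × Fin 3 => C p.1 p.2 = (x, b)).card = 2)
    (σ : Fin n → Bool) (hσ : ∀ j : Fin m, ∃ t : Fin 3, σ (C j t).1 = (C j t).2) :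
    ∃ A : (Fin n ⊕ Fin (n + 1) ⊕ Fin m × Fin 3) → Finset ℕ,
      (∀ i, ∃ a b, A i = Finset.Ico a b) ∧
      (∀ i i', i ≠ i' → Disjoint (A i) (A i')) ∧
      Finset.univ.biUnion A = Finset.range (5 * n + m + 1) ∧
      (∀ i, ∀ g ∈ A i, umaxVal n m C i g = 1) ∧
      (∀ i, (A i).card ≤ 2) := by
  classical
  choose w hw using hσ
  set AV : Fin n → Finset ℕ := fun x =>
    (Finset.univ.filter fun p : Fin m × Fin 3 =>
      (C p.1 p.2).1 = x ∧ w p.1 = p.2).image fun p => itm C p.1 p.2 with hAV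
  set AD : Fin (n + 1) → Finset ℕ := fun d =>
    if (d : ℕ) < n then {5 * (d : ℕ) + 2} else {5 * n} with hAD
  set AO : Fin m × Fin 3 → Finset ℕ := fun p =>
    if w p.1 = p.2 then {5 * n + 1 + (p.1 : ℕ)} else {itm C p.1 p.2} with hAO
  have hwit : ∀ p : Fin m × Fin 3, w p.1 = p.2 → σ (C p.1 p.2).1 = (C p.1 p.2).2 := by
    intro p hp; have := hw p.1; rwa [hp] at this
  have hmemV : ∀ (x : Fin n) (g : ℕ), g ∈ AV x ↔
      ∃ p : Fin m × Fin 3, (C p.1 p.2).1 = x ∧ w p.1 = p.2 ∧ itm C p.1 p.2 = g := by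
    intro x g
    simp only [hAV, Finset.mem_image, Finset.mem_filter, Finset.mem_univ, true_and]
    tauto
  have hmemD : ∀ (d : Fin (n + 1)) (g : ℕ), g ∈ AD d →
      ((d : ℕ) < n ∧ g = 5 * (d : ℕ) + 2) ∨ ((d : ℕ) = n ∧ g = 5 * n) := by
    intro d g hg
    have hdn := d.isLt
    by_cases hd : (d : ℕ) < n
    · simp only [hAD, hd, if_true, Finset.mem_singleton] at hg
      exact Or.inl ⟨hd, hg⟩
    · simp only [hAD, hd, if_false, Finset.mem_singleton] at hg
      exact Or.inr ⟨by omega, hg⟩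
  have hmemO : ∀ (p : Fin m × Fin 3) (g : ℕ), g ∈ AO p →
      (w p.1 = p.2 ∧ g = 5 * n + 1 + (p.1 : ℕ)) ∨ (¬ w p.1 = p.2 ∧ g = itm C p.1 p.2) := by
    intro p g hg
    by_cases hp : w p.1 = p.2
    · simp only [hAO, hp, if_true, Finset.mem_singleton] at hg
      exact Or.inl ⟨hp, hg⟩
    · simp only [hAO, hp, if_false, Finset.mem_singleton] at hg
      exact Or.inr ⟨hp, hg⟩
  have hVpair : ∀ x : Fin n, AV x ⊆
      {5 * (x : ℕ) + (if σ x then 0 else 3), 5 * (x : ℕ) + (if σ x then 0 else 3) + 1} := by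
    intro x g hg
    rw [hmemV] at hg
    obtain ⟨p, hp1, hp2, hp3⟩ := hg
    have hb : σ x = (C p.1 p.2).2 := by rw [← hp1]; exact hwit p hp2
    have hr := occRank_le_one hocc p.1 p.2
    have heq : g = 5 * (x : ℕ) + (if σ x then 0 else 3) + occRank C p.1 p.2 := by
      rw [← hp3]; simp only [itm, hp1, hb]
    simp only [Finset.mem_insert, Finset.mem_singleton]
    cases hσx : σ x <;> rw [hσx] at heq <;>
      simp only [Bool.false_eq_true, eq_self_iff_true, if_true, if_false] at heq ⊢ <;> omega
  have huniq : ∀ (g : ℕ) (i i' : Fin n ⊕ Fin (n + 1) ⊕ Fin m × Fin 3),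
      g ∈ Sum.elim AV (Sum.elim AD AO) i → g ∈ Sum.elim AV (Sum.elim AD AO) i' → i = i' := by
    intro g i i' hg hg'
    rcases i with x | d | p <;> rcases i' with x' | d' | p' <;>
      simp only [Sum.elim_inl, Sum.elim_inr] at hg hg'
    -- (V, V)
    · rw [hmemV] at hg hg'
      obtain ⟨p, hp1, hp2, hp3⟩ := hg
      obtain ⟨p', hp1', hp2', hp3'⟩ := hg'
      obtain ⟨e1, e2⟩ := itm_inj hocc (hp3.trans hp3'.symm)
      rw [← hp1, ← hp1']
      have : p = p' := Prod.ext e1 e2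
      rw [this]
    -- (V, D)
    · exfalso
      rw [hmemV] at hg
      obtain ⟨p, hp1, hp2, hp3⟩ := hg
      obtain ⟨c, hc, h5, h2, _⟩ := itm_decomp hocc p.1 p.2
      have hxn : ((C p.1 p.2).1 : ℕ) < n := (C p.1 p.2).1.isLt
      rcases hmemD d' g hg' with ⟨hd, rfl⟩ | ⟨hd, rfl⟩ <;> omega
    -- (V, O)
    · exfalso
      rw [hmemV] at hg
      obtain ⟨p, hp1, hp2, hp3⟩ := hg
      rcases hmemO p' g hg' with ⟨hp', h2⟩ | ⟨hp', h2⟩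
      · have := itm_lt hocc p.1 p.2
        omega
      · obtain ⟨e1, e2⟩ := itm_inj hocc
          (show itm C p.1 p.2 = itm C p'.1 p'.2 by rw [hp3, ← h2])
        exact hp' (by rw [← e1, ← e2]; exact hp2)
    -- (D, V)
    · exfalso
      rw [hmemV] at hg'
      obtain ⟨p, hp1, hp2, hp3⟩ := hg'
      obtain ⟨c, hc, h5, h2, _⟩ := itm_decomp hocc p.1 p.2
      have hxn : ((C p.1 p.2).1 : ℕ) < n := (C p.1 p.2).1.isLt
      rcases hmemD d g hg with ⟨hd, rfl⟩ | ⟨hd, rfl⟩ <;> omega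
    -- (D, D)
    · rcases hmemD d g hg with ⟨hd, h1⟩ | ⟨hd, h1⟩ <;>
        rcases hmemD d' g hg' with ⟨hd', h2⟩ | ⟨hd', h2⟩ <;>
        · have : (d : ℕ) = (d' : ℕ) := by omega
          exact congrArg (fun z => Sum.inr (Sum.inl z)) (Fin.ext this)
    -- (D, O)
    · exfalso
      rcases hmemO p' g hg' with ⟨hp', h2⟩ | ⟨hp', h2⟩ <;>
        rcases hmemD d g hg with ⟨hd, h1⟩ | ⟨hd, h1⟩
      · omega
      · omega
      · obtain ⟨c, hc, h5, h2, _⟩ := itm_decomp hocc p'.1 p'.2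
        have hxn : ((C p'.1 p'.2).1 : ℕ) < n := (C p'.1 p'.2).1.isLt
        omega
      · obtain ⟨c, hc, h5, h2, _⟩ := itm_decomp hocc p'.1 p'.2
        have hxn : ((C p'.1 p'.2).1 : ℕ) < n := (C p'.1 p'.2).1.isLt
        omega
    -- (O, V)
    · exfalso
      rw [hmemV] at hg'
      obtain ⟨p', hp1, hp2, hp3⟩ := hg'
      rcases hmemO p g hg with ⟨hp, h1⟩ | ⟨hp, h1⟩
      · have := itm_lt hocc p'.1 p'.2
        omega
      · obtain ⟨e1, e2⟩ := itm_inj hocc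
          (show itm C p.1 p.2 = itm C p'.1 p'.2 by rw [hp3, ← h1])
        exact hp (by rw [e1, e2]; exact hp2)
    -- (O, D)
    · exfalso
      rcases hmemO p g hg with ⟨hp, h2⟩ | ⟨hp, h2⟩ <;>
        rcases hmemD d' g hg' with ⟨hd, h1⟩ | ⟨hd, h1⟩
      · omega
      · omega
      · obtain ⟨c, hc, h5, h2, _⟩ := itm_decomp hocc p.1 p.2
        have hxn : ((C p.1 p.2).1 : ℕ) < n := (C p.1 p.2).1.isLt
        omega
      · obtain ⟨c, hc, h5, h2, _⟩ := itm_decomp hocc p.1 p.2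
        have hxn : ((C p.1 p.2).1 : ℕ) < n := (C p.1 p.2).1.isLt
        omega
    -- (O, O)
    · rcases hmemO p g hg with ⟨hp, h1⟩ | ⟨hp, h1⟩ <;>
        rcases hmemO p' g hg' with ⟨hp', h2⟩ | ⟨hp', h2⟩
      · have hj : p.1 = p'.1 := Fin.ext (by omega)
        have : p = p' := Prod.ext hj (by rw [← hp, ← hp', hj])
        rw [this]
      · exfalso
        have := itm_lt hocc p'.1 p'.2
        omega
      · exfalso
        have := itm_lt hocc p.1 p.2
        omega
      · obtain ⟨e1, e2⟩ := itm_inj hocc (h1.symm.trans h2 : itm C p.1 p.2 = itm C p'.1 p'.2)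
        have : p = p' := Prod.ext e1 e2
        rw [this]
  refine ⟨Sum.elim AV (Sum.elim AD AO), ?_, ?_, ?_, ?_, ?_⟩
  -- intervals
  · rintro (x | d | p)
    · exact subset_pair (hVpair x)
    · simp only [Sum.elim_inr, Sum.elim_inl, hAD]
      by_cases hd : (d : ℕ) < n
      · exact ⟨5 * (d : ℕ) + 2, 5 * (d : ℕ) + 3, by
          rw [if_pos hd, show 5 * (d : ℕ) + 3 = 5 * (d : ℕ) + 2 + 1 from rfl,
            Nat.Ico_succ_singleton]⟩
      · exact ⟨5 * n, 5 * n + 1, by rw [if_neg hd, Nat.Ico_succ_singleton]⟩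
    · simp only [Sum.elim_inr, hAO]
      by_cases hp : w p.1 = p.2
      · exact ⟨5 * n + 1 + (p.1 : ℕ), 5 * n + 1 + (p.1 : ℕ) + 1, by
          rw [if_pos hp, Nat.Ico_succ_singleton]⟩
      · exact ⟨itm C p.1 p.2, itm C p.1 p.2 + 1, by
          rw [if_neg hp, Nat.Ico_succ_singleton]⟩
  -- disjoint
  · intro i i' hne
    rw [Finset.disjoint_left]
    intro g hg hg'
    exact hne (huniq g i i' hg hg')
  -- coverage
  · ext g
    simp only [Finset.mem_biUnion, Finset.mem_univ, true_and, Finset.mem_range]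
    constructor
    · rintro ⟨i, hi⟩
      rcases i with x | d | p <;> simp only [Sum.elim_inl, Sum.elim_inr] at hi
      · rw [hmemV] at hi
        obtain ⟨p, hp1, hp2, hp3⟩ := hi
        have := itm_lt hocc p.1 p.2
        omega
      · rcases hmemD d g hi with ⟨hd, rfl⟩ | ⟨hd, rfl⟩ <;> omega
      · rcases hmemO p g hi with ⟨hp, rfl⟩ | ⟨hp, rfl⟩
        · have := p.1.isLt
          omega
        · have := itm_lt hocc p.1 p.2
          omega
    · intro hgN
      by_cases hclause : 5 * n + 1 ≤ g
      · have hj : g - (5 * n + 1) < m := by omega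
        refine ⟨Sum.inr (Sum.inr (⟨g - (5 * n + 1), hj⟩, w ⟨g - (5 * n + 1), hj⟩)), ?_⟩
        simp only [Sum.elim_inr, hAO, eq_self_iff_true, if_true, Finset.mem_singleton]
        show g = 5 * n + 1 + (g - (5 * n + 1))
        omega
      · by_cases hlast : g = 5 * n
        · refine ⟨Sum.inr (Sum.inl ⟨n, by omega⟩), ?_⟩
          simp only [Sum.elim_inr, Sum.elim_inl, hAD]
          rw [if_neg (by exact lt_irrefl n), Finset.mem_singleton, hlast]
        · have hg5 : g < 5 * n := by omega
          have hgdm : g = 5 * (g / 5) + g % 5 := by omega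
          have hq : g / 5 < n := by omega
          have hr5 : g % 5 < 5 := by omega
          by_cases hr2 : g % 5 = 2
          · refine ⟨Sum.inr (Sum.inl ⟨g / 5, by omega⟩), ?_⟩
            simp only [Sum.elim_inr, Sum.elim_inl, hAD]
            rw [if_pos (show ((⟨g / 5, by omega⟩ : Fin (n+1)) : ℕ) < n from hq),
              Finset.mem_singleton]
            show g = 5 * (g / 5) + 2
            omega
          · -- occurrence item
            by_cases hpos : g % 5 < 2
            · obtain ⟨p, hCp, hrank⟩ := rank_surj hocc ⟨g / 5, hq⟩ true (g % 5) (by omega)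
              have hitm : itm C p.1 p.2 = g := by
                simp only [itm, hCp, hrank]; simp; omega
              by_cases hwt : w p.1 = p.2
              · refine ⟨Sum.inl ⟨g / 5, hq⟩, ?_⟩
                simp only [Sum.elim_inl]
                rw [hmemV]
                exact ⟨p, by rw [hCp], hwt, hitm⟩
              · refine ⟨Sum.inr (Sum.inr p), ?_⟩
                simp only [Sum.elim_inr, hAO, if_neg hwt, Finset.mem_singleton]
                exact hitm.symm
            · obtain ⟨p, hCp, hrank⟩ := rank_surj hocc ⟨g / 5, hq⟩ false (g % 5 - 3) (by omega)
              have hitm : itm C p.1 p.2 = g := by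
                simp only [itm, hCp, hrank]; simp; omega
              by_cases hwt : w p.1 = p.2
              · refine ⟨Sum.inl ⟨g / 5, hq⟩, ?_⟩
                simp only [Sum.elim_inl]
                rw [hmemV]
                exact ⟨p, by rw [hCp], hwt, hitm⟩
              · refine ⟨Sum.inr (Sum.inr p), ?_⟩
                simp only [Sum.elim_inr, hAO, if_neg hwt, Finset.mem_singleton]
                exact hitm.symm
  -- value 1
  · rintro (x | d | p) g hg <;> simp only [Sum.elim_inl, Sum.elim_inr] at hg
    · rw [hmemV] at hg
      obtain ⟨p, hp1, hp2, hp3⟩ := hg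
      obtain ⟨c, hc, h5, h2, _⟩ := itm_decomp hocc p.1 p.2
      rw [val_inl]
      rw [hp1] at hc
      omega
    · rw [val_div]
      exact hmemD d g hg
    · obtain ⟨j, t⟩ := p
      rw [val_occ]
      rcases hmemO (j, t) g hg with ⟨hp, rfl⟩ | ⟨hp, rfl⟩
      · exact Or.inl rfl
      · exact Or.inr rfl
  -- card
  · rintro (x | d | p)
    · refine (Finset.card_le_card (hVpair x)).trans ?_
      exact (Finset.card_insert_le _ _).trans (by simp)
    · simp only [Sum.elim_inr, Sum.elim_inl, hAD]
      split_ifs <;> simp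
    · simp only [Sum.elim_inr, hAO]
      split_ifs <;> simp


lemma pointwise (A : (Fin n ⊕ Fin (n + 1) ⊕ Fin m × Fin 3) → Finset ℕ)
    (hdisj : ∀ i i', i ≠ i' → Disjoint (A i) (A i'))
    (hcov : Finset.univ.biUnion A = Finset.range (5 * n + m + 1))
    (hsum : ∑ i, ∑ g ∈ A i, umaxVal n m C i g = 5 * n + m + 1) :
    ∀ i, ∀ g ∈ A i, umaxVal n m C i g = 1 := by
  have hcard : ∑ i, (A i).card = 5 * n + m + 1 := by
    rw [← Finset.card_biUnion (fun i _ i' _ h => hdisj i i' h), hcov, Finset.card_range]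
  have hle : ∀ i ∈ Finset.univ, (∑ g ∈ A i, umaxVal n m C i g) ≤ (A i).card := by
    intro i _
    calc ∑ g ∈ A i, umaxVal n m C i g ≤ ∑ _g ∈ A i, 1 :=
          Finset.sum_le_sum fun g _ => val_le_one C i g
      _ = (A i).card := by simp
  have heq := (Finset.sum_eq_sum_iff_of_le hle).1 (by rw [hsum, hcard])
  intro i g hg
  have hi := heq i (Finset.mem_univ i)
  have hle2 : ∀ g ∈ A i, umaxVal n m C i g ≤ 1 := fun g _ => val_le_one C i g
  have := (Finset.sum_eq_sum_iff_of_le hle2).1 (by rw [hi]; simp)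
  exact this g hg

lemma welfare_eq (A : (Fin n ⊕ Fin (n + 1) ⊕ Fin m × Fin 3) → Finset ℕ)
    (hdisj : ∀ i i', i ≠ i' → Disjoint (A i) (A i'))
    (hcov : Finset.univ.biUnion A = Finset.range (5 * n + m + 1))
    (hval : ∀ i, ∀ g ∈ A i, umaxVal n m C i g = 1) :
    ∑ i, ∑ g ∈ A i, umaxVal n m C i g = 5 * n + m + 1 := by
  have h1 : ∀ i ∈ Finset.univ, ∑ g ∈ A i, umaxVal n m C i g = (A i).card := by
    intro i _
    rw [Finset.sum_congr rfl (hval i)]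
    simp
  rw [Finset.sum_congr rfl h1, ← Finset.card_biUnion (fun i _ i' _ h => hdisj i i' h),
    hcov, Finset.card_range]

lemma extract (hocc : ∀ (x : Fin n) (b : Bool),
      (Finset.univ.filter fun p : Fin m × Fin 3 => C p.1 p.2 = (x, b)).card = 2)
    (A : (Fin n ⊕ Fin (n + 1) ⊕ Fin m × Fin 3) → Finset ℕ)
    (hIco : ∀ i, ∃ a b, A i = Finset.Ico a b)
    (hcov : Finset.univ.biUnion A = Finset.range (5 * n + m + 1))
    (hval : ∀ i, ∀ g ∈ A i, umaxVal n m C i g = 1) :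
    ∃ σ : Fin n → Bool, ∀ j : Fin m, ∃ t : Fin 3, σ (C j t).1 = (C j t).2 := by
  classical
  have hcovered : ∀ g, g < 5 * n + m + 1 → ∃ i, g ∈ A i := by
    intro g hg
    have : g ∈ Finset.univ.biUnion A := by rw [hcov]; simpa using hg
    simpa using this
  refine ⟨fun x => decide (5 * (x : ℕ) ∈ A (Sum.inl x) ∨ 5 * (x : ℕ) + 1 ∈ A (Sum.inl x)), ?_⟩
  intro j
  have hstep1 : ∃ t : Fin 3, 5 * n + 1 + (j : ℕ) ∈ A (Sum.inr (Sum.inr (j, t))) := by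
    obtain ⟨i, hi⟩ := hcovered (5 * n + 1 + (j : ℕ)) (by have := j.isLt; omega)
    have hv := hval i _ hi
    rcases i with x | d | ⟨j', t'⟩
    · exfalso
      rw [val_inl] at hv
      have := x.isLt
      rcases hv with h | h | h | h <;> omega
    · exfalso
      rw [val_div] at hv
      rcases hv with ⟨h1, h2⟩ | ⟨h1, h2⟩ <;> omega
    · rw [val_occ] at hv
      rcases hv with h | h
      · have hjj : j' = j := Fin.ext (by omega)
        exact ⟨t', by rwa [hjj] at hi⟩
      · exfalso
        have := itm_lt hocc j' t'
        omega
  obtain ⟨t, ht⟩ := hstep1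
  refine ⟨t, ?_⟩
  have hltn := itm_lt hocc j t
  have hnotin : itm C j t ∉ A (Sum.inr (Sum.inr (j, t))) := by
    intro hmem
    obtain ⟨a, b, hab⟩ := hIco (Sum.inr (Sum.inr (j, t)))
    rw [hab, Finset.mem_Ico] at hmem ht
    have h5n : 5 * n ∈ A (Sum.inr (Sum.inr (j, t))) := by
      rw [hab, Finset.mem_Ico]; omega
    have hv := hval _ _ h5n
    rw [val_occ] at hv
    rcases hv with h | h <;> omega
  obtain ⟨i2, hi2⟩ := hcovered (itm C j t) (by omega)
  obtain ⟨c, hc, h5, h2, hcT, hcF⟩ := itm_decomp hocc j t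
  have hxn : ((C j t).1 : ℕ) < n := (C j t).1.isLt
  have hvar : itm C j t ∈ A (Sum.inl (C j t).1) := by
    have hv := hval i2 _ hi2
    rcases i2 with x | d | ⟨j', t'⟩
    · have hx : (x : ℕ) = ((C j t).1 : ℕ) := by
        have := x.isLt
        rcases hv' : hv with _
        rw [val_inl] at hv
        rcases hv with h | h | h | h <;> omega
      have : x = (C j t).1 := Fin.ext hx
      rwa [this] at hi2
    · exfalso
      rw [val_div] at hv
      rcases hv with ⟨h1', h2'⟩ | ⟨h1', h2'⟩ <;> omega
    · exfalso
      rw [val_occ] at hv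
      rcases hv with h | h
      · omega
      · obtain ⟨e1, e2⟩ := itm_inj hocc h
        rw [← e1, ← e2] at hi2
        exact hnotin hi2
  have hr := occRank_le_one hocc j t
  show decide (5 * ((C j t).1 : ℕ) ∈ A (Sum.inl (C j t).1) ∨
      5 * ((C j t).1 : ℕ) + 1 ∈ A (Sum.inl (C j t).1)) = (C j t).2
  cases hb : (C j t).2
  · have hcv := hcF hb
    have hno : ¬ (5 * ((C j t).1 : ℕ) ∈ A (Sum.inl (C j t).1) ∨
        5 * ((C j t).1 : ℕ) + 1 ∈ A (Sum.inl (C j t).1)) := by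
      rintro (hmem | hmem) <;>
      · obtain ⟨a, b, hab⟩ := hIco (Sum.inl (C j t).1)
        rw [hab, Finset.mem_Ico] at hmem
        have hvar' := hvar
        rw [hab, Finset.mem_Ico] at hvar'
        have hmid : 5 * ((C j t).1 : ℕ) + 2 ∈ A (Sum.inl (C j t).1) := by
          rw [hab, Finset.mem_Ico]; omega
        have hv := hval _ _ hmid
        rw [val_inl] at hv
        rcases hv with h | h | h | h <;> omega
    exact decide_eq_false hno
  · have hcv := hcT hb
    have hyes : 5 * ((C j t).1 : ℕ) ∈ A (Sum.inl (C j t).1) ∨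
        5 * ((C j t).1 : ℕ) + 1 ∈ A (Sum.inl (C j t).1) := by
      rcases (by omega : itm C j t = 5 * ((C j t).1 : ℕ) ∨
          itm C j t = 5 * ((C j t).1 : ℕ) + 1) with h | h
      · left; rw [← h]; exact hvar
      · right; rw [← h]; exact hvar
    exact decide_eq_true hyes


end UmaxAux

theorem umax_reduction_from_2L_OCC_3SAT (n m : ℕ) (C : Fin m → Fin 3 → Fin n × Bool)
    (hocc : ∀ (x : Fin n) (b : Bool),
      (Finset.univ.filter fun p : Fin m × Fin 3 => C p.1 p.2 = (x, b)).card = 2) :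
    ((∃ A : (Fin n ⊕ Fin (n + 1) ⊕ Fin m × Fin 3) → Finset ℕ,
        (∀ i, ∃ a b, A i = Finset.Ico a b) ∧
        (∀ i i', i ≠ i' → Disjoint (A i) (A i')) ∧
        Finset.univ.biUnion A = Finset.range (5 * n + m + 1) ∧
        ∑ i, ∑ g ∈ A i, umaxVal n m C i g = 5 * n + m + 1) ↔
      (∃ σ : Fin n → Bool, ∀ j : Fin m, ∃ t : Fin 3, σ (C j t).1 = (C j t).2)) ∧
    ((∃ σ : Fin n → Bool, ∀ j : Fin m, ∃ t : Fin 3, σ (C j t).1 = (C j t).2) →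
      ∃ A : (Fin n ⊕ Fin (n + 1) ⊕ Fin m × Fin 3) → Finset ℕ,
        (∀ i, ∃ a b, A i = Finset.Ico a b) ∧
        (∀ i i', i ≠ i' → Disjoint (A i) (A i')) ∧
        Finset.univ.biUnion A = Finset.range (5 * n + m + 1) ∧
        ∑ i, ∑ g ∈ A i, umaxVal n m C i g = 5 * n + m + 1 ∧
        ∀ i, (A i).card ≤ 2) := by
  constructor
  · constructor
    · rintro ⟨A, hIco, hdisj, hcov, hsum⟩
      exact UmaxAux.extract hocc A hIco hcov (UmaxAux.pointwise A hdisj hcov hsum)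
    · rintro ⟨σ, hσ⟩
      obtain ⟨A, h1, h2, h3, h4, h5⟩ := UmaxAux.construct hocc σ hσ
      exact ⟨A, h1, h2, h3, UmaxAux.welfare_eq A h2 h3 h4⟩
  · rintro ⟨σ, hσ⟩
    obtain ⟨A, h1, h2, h3, h4, h5⟩ := UmaxAux.construct hocc σ hσ
    exact ⟨A, h1, h2, h3, UmaxAux.welfare_eq A h2 h3 h4, h5⟩
end
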